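/- Let K ∈ ℝ, N ∈ (1,∞), D > 0 (with D ≤ π√((N−1)/K) if K > 0). Then the map a ↦ v_{K,N,D}(a) := ∫₀ᵃ h^a_{K,N,D}(x) dx is strictly increasing on (0,D) and maps (0,D) bijectively onto (0,1). -/

import Mathlib

open MeasureTheory Filter

noncomputable section

/-- The comparison function `s_κ(θ)`:
`sin(√κ·θ)/√κ` if `κ > 0`, `θ` if `κ = 0`, `sinh(√(−κ)·θ)/√(−κ)` if `κ < 0`. -/
def sK (κ θ : ℝ) : ℝ :=
  if 0 < κ then Real.sin (Real.sqrt κ * θ) / Real.sqrt κ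
  else if κ = 0 then θ
  else Real.sinh (Real.sqrt (-κ) * θ) / Real.sqrt (-κ)

/-- `h` is an `MCP(K,N)`-density on the interval `I ⊆ ℝ`: it is a nonnegative Borel
function satisfying
`h(t·x₁+(1−t)·x₀) ≥ (s_{K/(N−1)}((1−t)|x₁−x₀|)/s_{K/(N−1)}(|x₁−x₀|))^{N−1}·h(x₀)`
for all `x₀, x₁ ∈ I`, `t ∈ [0,1]`; when `x₀ = x₁` the coefficient is interpreted as `1−t`,
and when `K > 0` and `|x₁−x₀| ≥ π√((N−1)/K)` the coefficient is `+∞`, forcing `h x₀ = 0`. -/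
def IsMCPDensity (K N : ℝ) (I : Set ℝ) (h : ℝ → ℝ) : Prop :=
  Measurable h ∧ (∀ x ∈ I, 0 ≤ h x) ∧
  ∀ x₀ ∈ I, ∀ x₁ ∈ I, ∀ t ∈ Set.Icc (0:ℝ) 1,
    (x₀ = x₁ → (1 - t) * h x₀ ≤ h x₀) ∧
    (x₀ ≠ x₁ →
      ((0 < K ∧ Real.pi * Real.sqrt ((N - 1) / K) ≤ |x₁ - x₀|) → h x₀ = 0) ∧
      (¬(0 < K ∧ Real.pi * Real.sqrt ((N - 1) / K) ≤ |x₁ - x₀|) →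
        (sK (K / (N - 1)) ((1 - t) * |x₁ - x₀|) / sK (K / (N - 1)) |x₁ - x₀|) ^ (N - 1) * h x₀
          ≤ h (t * x₁ + (1 - t) * x₀)))

/-- `h` is a `CD(K,N)`-density on the interval `I ⊆ ℝ`. -/
def IsCDDensity (K N : ℝ) (I : Set ℝ) (h : ℝ → ℝ) : Prop :=
  (∀ x ∈ I, 0 ≤ h x) ∧
  ∀ x₀ ∈ I, ∀ x₁ ∈ I, x₀ < x₁ → ∀ t ∈ Set.Icc (0:ℝ) 1,
    (sK (K / (N - 1)) ((1 - t) * (x₁ - x₀)) / sK (K / (N - 1)) (x₁ - x₀)) * h x₀ ^ (1 / (N - 1))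
      + (sK (K / (N - 1)) (t * (x₁ - x₀)) / sK (K / (N - 1)) (x₁ - x₀)) * h x₁ ^ (1 / (N - 1))
      ≤ h ((1 - t) * x₀ + t * x₁) ^ (1 / (N - 1))

/-- The lower-bound function `f_{K,N,D}`. -/
def fKND (K N D : ℝ) (x : ℝ) : ℝ :=
  if x = 0 ∨ x = D then 0
  else ((∫ y in (0:ℝ)..x, (sK (K / (N - 1)) (D - y) / sK (K / (N - 1)) (D - x)) ^ (N - 1)) +
        (∫ y in x..D, (sK (K / (N - 1)) y / sK (K / (N - 1)) x) ^ (N - 1)))⁻¹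

/-- The model density `h^a_{K,N,D}`. -/
def hKND (K N D a : ℝ) (x : ℝ) : ℝ :=
  if x ≤ a then fKND K N D a * (sK (K / (N - 1)) (D - x) / sK (K / (N - 1)) (D - a)) ^ (N - 1)
  else fKND K N D a * (sK (K / (N - 1)) x / sK (K / (N - 1)) a) ^ (N - 1)

/-- `v_{K,N,D}(a) = ∫₀ᵃ h^a_{K,N,D}(x) dx`. -/
def vKND (K N D a : ℝ) : ℝ := ∫ x in (0:ℝ)..a, hKND K N D a x

/-- The (outer) Minkowski content of `A` with respect to `μ`:
`liminf_{ε→0⁺} (μ(Aᵉ) − μ(A))/ε` where `Aᵉ` is the open `ε`-neighbourhood of `A`. -/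
def mink (μ : Measure ℝ) (A : Set ℝ) : ℝ :=
  Filter.liminf (fun ε : ℝ => ((μ (Metric.thickening ε A)).toReal - (μ A).toReal) / ε)
    (nhdsWithin 0 (Set.Ioi 0))

/-- The measure `μ_h = h · Leb` restricted to `[0,D]`. -/
def muh (h : ℝ → ℝ) (D : ℝ) : Measure ℝ :=
  (volume.restrict (Set.Icc (0:ℝ) D)).withDensity (fun x => ENNReal.ofReal (h x))

/-- The restricted one-dimensional isoperimetric profile `Ĩ_{K,N,D}(v)` over
`MCP(K,N)`-densities on `[0,D]` integrating to `1`. -/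
def Itilde (K N D v : ℝ) : ℝ :=
  sInf { p : ℝ | ∃ h : ℝ → ℝ, IsMCPDensity K N (Set.Icc 0 D) h ∧
    (∫ x in (0:ℝ)..D, h x) = 1 ∧
    ∃ A : Set ℝ, MeasurableSet A ∧ A ⊆ Set.Icc 0 D ∧ (muh h D A).toReal = v ∧
      p = mink (muh h D) A }

/-- The restricted one-dimensional isoperimetric profile `Ĩ^{CD}_{K,N,D}(v)` over
`CD(K,N)`-densities on `[0,D]` integrating to `1`. -/
def ItildeCD (K N D v : ℝ) : ℝ :=
  sInf { p : ℝ | ∃ h : ℝ → ℝ, IsCDDensity K N (Set.Icc 0 D) h ∧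
    (∫ x in (0:ℝ)..D, h x) = 1 ∧
    ∃ A : Set ℝ, MeasurableSet A ∧ A ⊆ Set.Icc 0 D ∧ (muh h D A).toReal = v ∧
      p = mink (muh h D) A }

/-!
Write `g = s_{K/(N-1)}^{N-1}` and `I c = ∫_c^D g`. Multiplying numerator and denominator of
`v(a) = f(a) ∫₀ᵃ (g(D-x)/g(D-a))` by `g a · g (D - a)` gives `v(a) = W a / (W a + W (D - a))` with
`W a = g a · I (D - a)`, so `v (D - a) = 1 - v a`. The identity
`s b · s (D - a) - s a · s (D - b) = s D · s (b - a) ≥ 0` makes `g (D - a) / g a` antitone; as `I` is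
strictly antitone, `v` is strictly increasing. For `a ≤ D/2` the same identity gives
`g a ≤ g (D - a)`, hence `v a ≤ I (D - a) / I (D/2) → 0` as `a → 0`; by the symmetry `v → 1` at `D`,
and the intermediate value theorem gives surjectivity onto `(0, 1)`.
-/

open Real Set Topology

section ComparisonFunction

theorem continuous_sK (κ : ℝ) : Continuous (sK κ) := by
  unfold sK
  rcases lt_trichotomy 0 κ with h | rfl | h
  · simp only [if_pos h]
    fun_prop
  · simpa using continuous_id'
  · simp only [if_neg h.not_gt, if_neg h.ne]
    fun_prop

variable {κ D θ : ℝ}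

theorem sK_nonneg (hκD : 0 < κ → √κ * D ≤ π) (h0 : 0 ≤ θ) (hθ : θ ≤ D) : 0 ≤ sK κ θ := by
  unfold sK
  split_ifs with hpos hzero
  · refine div_nonneg (sin_nonneg_of_nonneg_of_le_pi (by positivity) ?_) (sqrt_nonneg κ)
    exact (mul_le_mul_of_nonneg_left hθ (sqrt_nonneg κ)).trans (hκD hpos)
  · exact h0
  · exact div_nonneg (sinh_nonneg_iff.mpr (by positivity)) (sqrt_nonneg _)

theorem sK_pos (hκD : 0 < κ → √κ * D ≤ π) (h0 : 0 < θ) (hθ : θ < D) : 0 < sK κ θ := by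
  unfold sK
  split_ifs with hpos hzero
  · have hs : 0 < √κ := sqrt_pos.mpr hpos
    refine div_pos (sin_pos_of_pos_of_lt_pi (by positivity) ?_) hs
    exact (mul_lt_mul_of_pos_left hθ hs).trans_le (hκD hpos)
  · exact h0
  · have hs : 0 < √(-κ) := sqrt_pos.mpr (by grind)
    exact div_pos (sinh_pos_iff.mpr (by positivity)) hs

theorem sK_mul_sK_sub_le {a b : ℝ} (hκD : 0 < κ → √κ * D ≤ π)
    (ha : 0 ≤ a) (hab : a ≤ b) (hbD : b ≤ D) :
    sK κ a * sK κ (D - b) ≤ sK κ b * sK κ (D - a) := by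
  have hD : 0 ≤ D := by linarith
  unfold sK
  split_ifs with hpos hzero
  · have hc : 0 < √κ := sqrt_pos.mpr hpos
    set c := √κ
    have hcD : c * D ≤ π := hκD hpos
    have key : sin (c * b) * sin (c * (D - a)) - sin (c * a) * sin (c * (D - b))
        = sin (c * D) * sin (c * (b - a)) := by
      simp only [mul_sub, sin_sub]
      ring
    have hsD : 0 ≤ sin (c * D) := sin_nonneg_of_nonneg_of_le_pi (by positivity) hcD
    have hsba : 0 ≤ sin (c * (b - a)) :=
      sin_nonneg_of_nonneg_of_le_pi (mul_nonneg hc.le (by linarith))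
        (le_trans (by gcongr; linarith) hcD)
    rw [div_mul_div_comm, div_mul_div_comm, div_le_div_iff_of_pos_right (by positivity)]
    nlinarith [mul_nonneg hsD hsba]
  · nlinarith
  · have hc : 0 < √(-κ) := sqrt_pos.mpr (by grind)
    set c := √(-κ)
    have key : sinh (c * b) * sinh (c * (D - a)) - sinh (c * a) * sinh (c * (D - b))
        = sinh (c * D) * sinh (c * (b - a)) := by
      simp only [mul_sub, sinh_sub]
      ring
    have hsD : 0 ≤ sinh (c * D) := sinh_nonneg_iff.mpr (by positivity)
    have hsba : 0 ≤ sinh (c * (b - a)) := sinh_nonneg_iff.mpr (mul_nonneg hc.le (by linarith))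
    rw [div_mul_div_comm, div_mul_div_comm, div_le_div_iff_of_pos_right (by positivity)]
    nlinarith [mul_nonneg hsD hsba]

theorem sK_rpow_mul_sK_sub_rpow_le {a b p : ℝ} (hκD : 0 < κ → √κ * D ≤ π) (hp : 0 ≤ p)
    (ha : 0 ≤ a) (hab : a ≤ b) (hbD : b ≤ D) :
    sK κ a ^ p * sK κ (D - b) ^ p ≤ sK κ b ^ p * sK κ (D - a) ^ p := by
  have hsa := sK_nonneg hκD ha (hab.trans hbD)
  have hsDb := sK_nonneg hκD (sub_nonneg.mpr hbD) (by linarith)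
  rw [← mul_rpow hsa hsDb, ← mul_rpow (sK_nonneg hκD (ha.trans hab) hbD)
    (sK_nonneg hκD (by linarith) (by linarith))]
  exact rpow_le_rpow (mul_nonneg hsa hsDb) (sK_mul_sK_sub_le hκD ha hab hbD) hp

end ComparisonFunction

theorem sqrt_div_mul_le_pi {K N D : ℝ} (hN : 1 < N)
    (hDK : 0 < K → D ≤ π * √((N - 1) / K)) (hκ : 0 < K / (N - 1)) :
    √(K / (N - 1)) * D ≤ π := by
  have hN1 : 0 < N - 1 := by linarith
  have hK : 0 < K := by simpa [hN1] using (div_pos_iff_of_pos_right hN1).mp hκ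
  have hs : 0 < √(K / (N - 1)) := sqrt_pos.mpr hκ
  have hDK' := hDK hK
  rw [← inv_div, sqrt_inv] at hDK'
  calc √(K / (N - 1)) * D ≤ √(K / (N - 1)) * (π * (√(K / (N - 1)))⁻¹) := by gcongr
    _ = π := by field_simp

theorem surjOn_Ioo_of_tendsto {α β : Type*} [ConditionallyCompleteLinearOrder α]
    [TopologicalSpace α] [OrderTopology α] [DenselyOrdered α] [LinearOrder β] [TopologicalSpace β]
    [OrderClosedTopology β] {f : α → β} {a b : α} {c d : β} (hab : a < b)
    (hf : ContinuousOn f (Ioo a b)) (ha : Tendsto f (𝓝[>] a) (𝓝 c))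
    (hb : Tendsto f (𝓝[<] b) (𝓝 d)) : SurjOn f (Ioo a b) (Ioo c d) := by
  intro t ht
  have := nhdsGT_neBot_of_exists_gt ⟨b, hab⟩
  have := nhdsLT_neBot_of_exists_lt ⟨a, hab⟩
  obtain ⟨x, hxt, hx⟩ :=
    ((ha.eventually_lt_const ht.1).and (Ioo_mem_nhdsGT hab)).exists
  obtain ⟨y, hyt, hy⟩ :=
    ((hb.eventually_const_lt ht.2).and (Ioo_mem_nhdsLT hab)).exists
  have hsub : uIcc x y ⊆ Ioo a b := ordConnected_Ioo.uIcc_subset hx hy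
  obtain ⟨z, hz, rfl⟩ := intermediate_value_uIcc (hf.mono hsub) (mem_uIcc_of_le hxt.le hyt.le)
  exact ⟨z, hsub hz, rfl⟩

theorem intervalIntegral_div_const_rpow {f : ℝ → ℝ} {a b c p : ℝ}
    (hf : ∀ x ∈ uIcc a b, 0 ≤ f x) (hc : 0 ≤ c) :
    ∫ x in a..b, (f x / c) ^ p = (∫ x in a..b, f x ^ p) / c ^ p := by
  rw [← intervalIntegral.integral_div (μ := volume)]
  exact intervalIntegral.integral_congr fun x hx => div_rpow (hf x hx) hc p

section VolumeRatio

variable {g : ℝ → ℝ} {D a : ℝ}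

def volumeWeight (g : ℝ → ℝ) (D a : ℝ) : ℝ := g a * ∫ x in D - a..D, g x

def volumeRatio (g : ℝ → ℝ) (D a : ℝ) : ℝ :=
  volumeWeight g D a / (volumeWeight g D a + volumeWeight g D (D - a))

theorem strictAntiOn_integral_tail (hg : Continuous g) (hpos : ∀ x ∈ Ioo 0 D, 0 < g x) :
    StrictAntiOn (fun c => ∫ x in c..D, g x) (Icc 0 D) := by
  intro c hc c' hc' hcc'
  have hsplit := intervalIntegral.integral_add_adjacent_intervals
    (hg.intervalIntegrable (μ := volume) c c') (hg.intervalIntegrable c' D)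
  have hmid : 0 < ∫ x in c..c', g x :=
    intervalIntegral.intervalIntegral_pos_of_pos_on (hg.intervalIntegrable c c')
      (fun x hx => hpos x ⟨hc.1.trans_lt hx.1, hx.2.trans_le hc'.2⟩) hcc'
  simp only
  linarith

theorem integral_tail_pos (hg : Continuous g) (hpos : ∀ x ∈ Ioo 0 D, 0 < g x)
    (ha : a ∈ Ioo 0 D) : 0 < ∫ x in a..D, g x := by
  simpa using strictAntiOn_integral_tail hg hpos ⟨ha.1.le, ha.2.le⟩
    ⟨ha.1.le.trans ha.2.le, le_rfl⟩ ha.2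

theorem volumeWeight_pos (hg : Continuous g) (hpos : ∀ x ∈ Ioo 0 D, 0 < g x)
    (ha : a ∈ Ioo 0 D) : 0 < volumeWeight g D a :=
  mul_pos (hpos a ha) (integral_tail_pos hg hpos (sub_mem_Ioo_zero_iff_right.mpr ha))

theorem volumeRatio_mem_Ioo (hg : Continuous g) (hpos : ∀ x ∈ Ioo 0 D, 0 < g x)
    (ha : a ∈ Ioo 0 D) : volumeRatio g D a ∈ Ioo 0 1 := by
  have h₁ := volumeWeight_pos hg hpos ha
  have h₂ := volumeWeight_pos hg hpos (a := D - a) (sub_mem_Ioo_zero_iff_right.mpr ha)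
  exact ⟨by unfold volumeRatio; positivity, (div_lt_one (by positivity)).mpr (by linarith)⟩

theorem volumeRatio_sub (hg : Continuous g) (hpos : ∀ x ∈ Ioo 0 D, 0 < g x)
    (ha : a ∈ Ioo 0 D) : volumeRatio g D (D - a) = 1 - volumeRatio g D a := by
  have h₁ := volumeWeight_pos hg hpos ha
  have h₂ := volumeWeight_pos hg hpos (a := D - a) (sub_mem_Ioo_zero_iff_right.mpr ha)
  unfold volumeRatio
  rw [sub_sub_cancel]
  field_simp
  ring

theorem strictMonoOn_volumeRatio (hg : Continuous g) (hpos : ∀ x ∈ Ioo 0 D, 0 < g x)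
    (hcross : ∀ a b, 0 < a → a ≤ b → b < D → g a * g (D - b) ≤ g b * g (D - a)) :
    StrictMonoOn (volumeRatio g D) (Ioo 0 D) := by
  intro a ha b hb hab
  have hI := strictAntiOn_integral_tail hg hpos
  have hDa : D - a ∈ Ioo 0 D := sub_mem_Ioo_zero_iff_right.mpr ha
  have hDb : D - b ∈ Ioo 0 D := sub_mem_Ioo_zero_iff_right.mpr hb
  have hIb : (∫ x in b..D, g x) < ∫ x in a..D, g x :=
    hI (Ioo_subset_Icc_self ha) (Ioo_subset_Icc_self hb) hab
  have hIDa : (∫ x in D - a..D, g x) < ∫ x in D - b..D, g x :=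
    hI (Ioo_subset_Icc_self hDb) (Ioo_subset_Icc_self hDa) (by linarith)
  have hweights : volumeWeight g D a * volumeWeight g D (D - b)
      < volumeWeight g D b * volumeWeight g D (D - a) := by
    unfold volumeWeight
    rw [sub_sub_cancel, sub_sub_cancel]
    calc g a * (∫ x in D - a..D, g x) * (g (D - b) * ∫ x in b..D, g x)
        = (g a * g (D - b)) * ((∫ x in D - a..D, g x) * ∫ x in b..D, g x) := by ring
      _ < (g b * g (D - a)) * ((∫ x in D - b..D, g x) * ∫ x in a..D, g x) := by
        refine mul_lt_mul' (hcross a b ha.1 hab.le hb.2) ?_ ?_ ?_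
        · exact mul_lt_mul'' hIDa hIb (integral_tail_pos hg hpos hDa).le
            (integral_tail_pos hg hpos hb).le
        · exact (mul_pos (integral_tail_pos hg hpos hDa) (integral_tail_pos hg hpos hb)).le
        · exact mul_pos (hpos b hb) (hpos _ hDa)
      _ = g b * (∫ x in D - b..D, g x) * (g (D - a) * ∫ x in a..D, g x) := by ring
  have ha₁ := volumeWeight_pos hg hpos ha
  have ha₂ := volumeWeight_pos hg hpos hDa
  have hb₁ := volumeWeight_pos hg hpos hb
  have hb₂ := volumeWeight_pos hg hpos hDb
  unfold volumeRatio
  rw [div_lt_div_iff₀ (by positivity) (by positivity)]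
  linarith

theorem continuous_integral_tail (hg : Continuous g) :
    Continuous fun c => ∫ x in c..D, g x :=
  (intervalIntegral.continuous_primitive (fun _ _ => hg.intervalIntegrable _ _) D).neg.congr
    fun c => (intervalIntegral.integral_symm D c).symm

theorem continuousOn_volumeRatio (hg : Continuous g) (hpos : ∀ x ∈ Ioo 0 D, 0 < g x) :
    ContinuousOn (volumeRatio g D) (Ioo 0 D) := by
  have hW : Continuous (volumeWeight g D) :=
    hg.mul ((continuous_integral_tail hg).comp (continuous_sub_left D))
  have hW' : Continuous fun a => volumeWeight g D (D - a) :=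
    hW.comp (continuous_sub_left D)
  refine hW.continuousOn.div (hW.add hW').continuousOn fun a ha => ?_
  have h₁ := volumeWeight_pos hg hpos ha
  have h₂ := volumeWeight_pos hg hpos (sub_mem_Ioo_zero_iff_right.mpr ha)
  positivity

theorem volumeRatio_le_of_le_half (hg : Continuous g) (hpos : ∀ x ∈ Ioo 0 D, 0 < g x)
    (hcross : ∀ a b, 0 < a → a ≤ b → b < D → g a * g (D - b) ≤ g b * g (D - a))
    (ha : a ∈ Ioc 0 (D / 2)) :
    volumeRatio g D a ≤ (∫ x in D - a..D, g x) / ∫ x in D / 2..D, g x := by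
  have ha' : a ∈ Ioo 0 D := ⟨ha.1, by linarith [ha.1, ha.2]⟩
  have hDa := sub_mem_Ioo_zero_iff_right.mpr ha'
  have hD2 : D / 2 ∈ Ioo 0 D := ⟨by linarith [ha.1, ha.2], by linarith [ha.1, ha.2]⟩
  have hga : g a ≤ g (D - a) := by
    have h := hcross a (D - a) ha.1 (by linarith [ha.2]) hDa.2
    rw [sub_sub_cancel] at h
    exact (mul_self_le_mul_self_iff (hpos a ha').le (hpos _ hDa).le).mpr h
  have hIa : (∫ x in D / 2..D, g x) ≤ ∫ x in a..D, g x :=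
    (strictAntiOn_integral_tail hg hpos).antitoneOn (Ioo_subset_Icc_self ha')
      (Ioo_subset_Icc_self hD2) ha.2
  have hIDa := integral_tail_pos hg hpos hDa
  have hI2 := integral_tail_pos hg hpos hD2
  have h₁ := volumeWeight_pos hg hpos ha'
  have h₂ := volumeWeight_pos hg hpos hDa
  calc volumeRatio g D a ≤ volumeWeight g D a / volumeWeight g D (D - a) :=
        div_le_div_of_nonneg_left h₁.le h₂ (by linarith)
    _ ≤ (∫ x in D - a..D, g x) / ∫ x in D / 2..D, g x := by
        rw [div_le_div_iff₀ h₂ hI2]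
        unfold volumeWeight
        rw [sub_sub_cancel]
        calc g a * (∫ x in D - a..D, g x) * ∫ x in D / 2..D, g x
            = (∫ x in D - a..D, g x) * (g a * ∫ x in D / 2..D, g x) := by ring
          _ ≤ (∫ x in D - a..D, g x) * (g (D - a) * ∫ x in a..D, g x) :=
            mul_le_mul_of_nonneg_left (mul_le_mul hga hIa hI2.le (hpos _ hDa).le) hIDa.le

theorem tendsto_volumeRatio_zero (hD : 0 < D) (hg : Continuous g) (hpos : ∀ x ∈ Ioo 0 D, 0 < g x)
    (hcross : ∀ a b, 0 < a → a ≤ b → b < D → g a * g (D - b) ≤ g b * g (D - a)) :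
    Tendsto (volumeRatio g D) (𝓝[>] 0) (𝓝 0) := by
  have hbound :
      Tendsto (fun a => (∫ x in D - a..D, g x) / ∫ x in D / 2..D, g x) (𝓝[>] 0) (𝓝 0) := by
    have h := ((continuous_integral_tail (D := D) hg).comp (continuous_sub_left D)).tendsto 0
    simpa using (h.div_const _).mono_left nhdsWithin_le_nhds
  refine squeeze_zero' ?_ ?_ hbound
  · filter_upwards [Ioo_mem_nhdsGT hD] with a ha using (volumeRatio_mem_Ioo hg hpos ha).1.le
  · filter_upwards [Ioc_mem_nhdsGT (half_pos hD)] with a ha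
      using volumeRatio_le_of_le_half hg hpos hcross ha

theorem tendsto_volumeRatio_right (hD : 0 < D) (hg : Continuous g) (hpos : ∀ x ∈ Ioo 0 D, 0 < g x)
    (hcross : ∀ a b, 0 < a → a ≤ b → b < D → g a * g (D - b) ≤ g b * g (D - a)) :
    Tendsto (volumeRatio g D) (𝓝[<] D) (𝓝 1) := by
  have hflip : Tendsto (fun a => D - a) (𝓝[<] D) (𝓝[>] 0) :=
    tendsto_nhdsWithin_of_tendsto_nhds_of_eventually_within _
      (by simpa using ((continuous_sub_left D).tendsto D).mono_left nhdsWithin_le_nhds)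
      (by filter_upwards [self_mem_nhdsWithin] with a ha using sub_pos.mpr (mem_Iio.mp ha))
  have h := tendsto_const_nhds (x := (1 : ℝ)).sub
    ((tendsto_volumeRatio_zero hD hg hpos hcross).comp hflip)
  rw [sub_zero] at h
  refine h.congr' ?_
  filter_upwards [Ioo_mem_nhdsLT hD] with a ha
  simp [volumeRatio_sub hg hpos ha]

theorem bijOn_volumeRatio (hD : 0 < D) (hg : Continuous g) (hpos : ∀ x ∈ Ioo 0 D, 0 < g x)
    (hcross : ∀ a b, 0 < a → a ≤ b → b < D → g a * g (D - b) ≤ g b * g (D - a)) :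
    BijOn (volumeRatio g D) (Ioo 0 D) (Ioo 0 1) :=
  ⟨fun _ ha => volumeRatio_mem_Ioo hg hpos ha, (strictMonoOn_volumeRatio hg hpos hcross).injOn,
    surjOn_Ioo_of_tendsto hD (continuousOn_volumeRatio hg hpos)
      (tendsto_volumeRatio_zero hD hg hpos hcross) (tendsto_volumeRatio_right hD hg hpos hcross)⟩

end VolumeRatio

theorem vKND_eq_volumeRatio {K N D a : ℝ} (hκD : 0 < K / (N - 1) → √(K / (N - 1)) * D ≤ π)
    (ha : a ∈ Ioo 0 D) :
    vKND K N D a = volumeRatio (fun x => sK (K / (N - 1)) x ^ (N - 1)) D a := by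
  set κ := K / (N - 1)
  have hs : ∀ x ∈ Icc 0 D, 0 ≤ sK κ x := fun x hx => sK_nonneg hκD hx.1 hx.2
  have hDa := sub_mem_Ioo_zero_iff_right.mpr ha
  have hga : 0 < sK κ a ^ (N - 1) := rpow_pos_of_pos (sK_pos hκD ha.1 ha.2) _
  have hgDa : 0 < sK κ (D - a) ^ (N - 1) := rpow_pos_of_pos (sK_pos hκD hDa.1 hDa.2) _
  have hleft : ∫ y in (0 : ℝ)..a, (sK κ (D - y) / sK κ (D - a)) ^ (N - 1)
      = (∫ x in D - a..D, sK κ x ^ (N - 1)) / sK κ (D - a) ^ (N - 1) := by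
    rw [intervalIntegral_div_const_rpow _ (hs _ (Ioo_subset_Icc_self hDa)),
      intervalIntegral.integral_comp_sub_left (fun x => sK κ x ^ (N - 1)) D, sub_zero]
    intro y hy
    rw [uIcc_of_le ha.1.le] at hy
    exact hs _ ⟨by linarith [hy.2, ha.2], by linarith [hy.1]⟩
  have hright : ∫ y in a..D, (sK κ y / sK κ a) ^ (N - 1)
      = (∫ x in a..D, sK κ x ^ (N - 1)) / sK κ a ^ (N - 1) := by
    refine intervalIntegral_div_const_rpow (fun y hy => hs _ ?_) (hs _ (Ioo_subset_Icc_self ha))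
    rw [uIcc_of_le ha.2.le] at hy
    exact ⟨ha.1.le.trans hy.1, hy.2⟩
  have hv : vKND K N D a
      = fKND K N D a * ∫ y in (0 : ℝ)..a, (sK κ (D - y) / sK κ (D - a)) ^ (N - 1) := by
    rw [vKND, ← intervalIntegral.integral_const_mul]
    refine intervalIntegral.integral_congr fun x hx => ?_
    rw [uIcc_of_le ha.1.le] at hx
    simp only [hKND, if_pos hx.2, κ]
  rw [hv, fKND, if_neg (by rintro (h | h) <;> linarith [ha.1, ha.2]), hleft, hright]
  unfold volumeRatio volumeWeight
  rw [sub_sub_cancel]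
  field_simp

/-- Lemma (volume map): `a ↦ v_{K,N,D}(a) = ∫₀ᵃ h^a_{K,N,D}` is strictly increasing on
`(0,D)` and maps `(0,D)` bijectively onto `(0,1)`. -/
theorem vKND_strictMono_bijOn (K N D : ℝ) (hN : 1 < N) (hD : 0 < D)
    (hDK : 0 < K → D ≤ Real.pi * Real.sqrt ((N - 1) / K)) :
    StrictMonoOn (vKND K N D) (Set.Ioo 0 D) ∧
    Set.BijOn (vKND K N D) (Set.Ioo 0 D) (Set.Ioo 0 1) := by
  have hκD := sqrt_div_mul_le_pi hN hDK
  set g : ℝ → ℝ := fun x => sK (K / (N - 1)) x ^ (N - 1)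
  have hg : Continuous g := (continuous_sK _).rpow_const fun _ => Or.inr (by linarith)
  have hpos : ∀ x ∈ Ioo 0 D, 0 < g x := fun x hx => rpow_pos_of_pos (sK_pos hκD hx.1 hx.2) _
  have hcross : ∀ a b, 0 < a → a ≤ b → b < D → g a * g (D - b) ≤ g b * g (D - a) :=
    fun a b ha hab hb => sK_rpow_mul_sK_sub_rpow_le hκD (by linarith) ha.le hab hb.le
  have heq : EqOn (volumeRatio g D) (vKND K N D) (Ioo 0 D) := fun a ha =>
    (vKND_eq_volumeRatio hκD ha).symm
  exact ⟨(strictMonoOn_volumeRatio hg hpos hcross).congr heq,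
    (bijOn_volumeRatio hD hg hpos hcross).congr heq⟩

end
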